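/- arXiv:math/0211414 — 5 statements merged into one kernel-verified Lean document; each statement's English description precedes it below -/
import Mathlib

section
/- If q(z1,z2,z3,z4) = (z1-z2)(z3-z4)/((z2-z3)(z4-z1)) = exp(-2iα) for 0 < α < π, and |z1-z2| = |z1-z4|, then |z3-z2| = |z3-z4|. -/
/-!
Only `|q| = 1` matters: taking norms of the cross-ratio gives
`|z1 - z2| |z3 - z4| = |z2 - z3| |z4 - z1|`, and the nonzero factor `|z1 - z2| = |z4 - z1|`
cancels.
-/

section NormedDivisionRing

variable {K : Type*} [NormedDivisionRing K]

theorem ne_zero_of_norm_div_eq_one {a b : K} (h : ‖a / b‖ = 1) : b ≠ 0 := by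
  rintro rfl
  simp at h

theorem norm_eq_of_norm_div_eq_one {a b : K} (h : ‖a / b‖ = 1) : ‖a‖ = ‖b‖ := by
  have hb : ‖b‖ ≠ 0 := norm_ne_zero_iff.mpr (ne_zero_of_norm_div_eq_one h)
  rwa [norm_div, div_eq_one_iff_eq hb] at h

end NormedDivisionRing

theorem norm_sub_eq_of_norm_crossRatio_eq_one {K : Type*} [NormedField K] {z1 z2 z3 z4 : K}
    (hq : ‖(z1 - z2) * (z3 - z4) / ((z2 - z3) * (z4 - z1))‖ = 1)
    (hiso : ‖z1 - z2‖ = ‖z1 - z4‖) :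
    ‖z3 - z2‖ = ‖z3 - z4‖ := by
  have h41 : ‖z4 - z1‖ ≠ 0 :=
    norm_ne_zero_iff.mpr (right_ne_zero_of_mul (ne_zero_of_norm_div_eq_one hq))
  have hprod := norm_eq_of_norm_div_eq_one hq
  rw [norm_mul, norm_mul, hiso, norm_sub_rev z1 z4, mul_comm ‖z2 - z3‖] at hprod
  rw [norm_sub_rev z3 z2, mul_left_cancel₀ h41 hprod]

theorem stmt_0_general (α : ℝ)
    (z1 z2 z3 z4 : ℂ)
    (hq : ((z1 - z2) * (z3 - z4)) / ((z2 - z3) * (z4 - z1)) =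
      Complex.exp (-2 * α * Complex.I))
    (hiso : ‖z1 - z2‖ = ‖z1 - z4‖) :
    ‖z3 - z2‖ = ‖z3 - z4‖ := by
  refine norm_sub_eq_of_norm_crossRatio_eq_one ?_ hiso
  rw [hq, Complex.norm_exp]
  simp

theorem stmt_0 (α : ℝ) (hα : 0 < α ∧ α < Real.pi)
    (z1 z2 z3 z4 : ℂ) (h23 : z2 ≠ z3) (h41 : z4 ≠ z1)
    (hq : ((z1 - z2) * (z3 - z4)) / ((z2 - z3) * (z4 - z1)) =
      Complex.exp (-2 * α * Complex.I))
    (hiso : ‖z1 - z2‖ = ‖z1 - z4‖) :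
    ‖z3 - z2‖ = ‖z3 - z4‖ :=
  stmt_0_general α z1 z2 z3 z4 hq hiso
end

section
/- If q(z1,z2,z3,z4) = exp(-2iα) for 0 < α < π, and the angle between the segments [z1,z2] and [z1,z4] is α with (z1,z2,z4) positively oriented (i.e. (z4-z1)/(z2-z1) = |(z4-z1)/(z2-z1)|·exp(iα)), then |z3-z2| = |z1-z2| and |z3-z4| = |z4-z1|. -/
/-!
Write `e = exp (iα)` and `z₄ - z₁ = r e (z₂ - z₁)` with `r` real. Clearing denominators in the
cross-ratio condition and cancelling `e (z₂ - z₁)` gives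
`(z₃ - z₂)(r - e) = (z₂ - z₁) e (1 - r e)` and `(z₃ - z₄)(r - e) = (z₂ - z₁) r (1 - r e)`.
For `|e| = 1` one has `|1 - r e| = |r - ē| = |r - e|`, which is nonzero because `e` is not real,
so taking absolute values gives both equalities.
-/

open ComplexConjugate

namespace Complex

theorem norm_one_sub_ofReal_mul {e : ℂ} (he : ‖e‖ = 1) (r : ℝ) :
    ‖1 - r * e‖ = ‖(r : ℂ) - e‖ := by
  have he_conj : e * conj e = 1 := by
    rw [mul_conj, normSq_eq_norm_sq, he, one_pow, ofReal_one]
  calc ‖1 - r * e‖ = ‖e * conj (e - r)‖ := by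
        rw [map_sub, conj_ofReal, mul_sub, he_conj, mul_comm e]
    _ = ‖(r : ℂ) - e‖ := by rw [norm_mul, he, one_mul, norm_conj, norm_sub_rev]

section CrossRatio

variable {e : ℂ} {r : ℝ} {z1 z2 z3 z4 : ℂ}

theorem mul_ofReal_sub_eq_of_cross_ratio (h21 : z2 ≠ z1) (he : e ≠ 0)
    (h41 : z4 - z1 = r * e * (z2 - z1))
    (hq : e ^ 2 * ((z1 - z2) * (z3 - z4)) = (z2 - z3) * (z4 - z1)) :
    (z3 - z2) * (r - e) = (z2 - z1) * e * (1 - r * e) ∧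
      (z3 - z4) * (r - e) = (z2 - z1) * r * (1 - r * e) := by
  have hz4 : z4 = z1 + r * e * (z2 - z1) := by linear_combination h41
  subst hz4
  have hae : (z2 - z1) * e ≠ 0 := mul_ne_zero (sub_ne_zero.mpr h21) he
  constructor <;> refine mul_left_cancel₀ hae ?_ <;> linear_combination hq

theorem norm_eq_of_cross_ratio (he : ‖e‖ = 1) (hre : (r : ℂ) ≠ e) (h21 : z2 ≠ z1)
    (h41 : z4 - z1 = r * e * (z2 - z1))
    (hq : e ^ 2 * ((z1 - z2) * (z3 - z4)) = (z2 - z3) * (z4 - z1)) :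
    ‖z3 - z2‖ = ‖z1 - z2‖ ∧ ‖z3 - z4‖ = ‖z4 - z1‖ := by
  have he0 : e ≠ 0 := norm_ne_zero_iff.mp (by rw [he]; exact one_ne_zero)
  obtain ⟨h32, h34⟩ := mul_ofReal_sub_eq_of_cross_ratio h21 he0 h41 hq
  have hre' : ‖(r : ℂ) - e‖ ≠ 0 := norm_ne_zero_iff.mpr (sub_ne_zero.mpr hre)
  have h32 := congrArg norm h32
  have h34 := congrArg norm h34
  simp only [norm_mul, he, mul_one, norm_one_sub_ofReal_mul he] at h32 h34
  rw [h41, norm_mul, norm_mul, he, mul_one, norm_sub_rev z1]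
  exact ⟨mul_right_cancel₀ hre' h32, by rw [mul_right_cancel₀ hre' h34, mul_comm]⟩

end CrossRatio

end Complex

open Complex

theorem stmt_1_general (α : ℝ) (hα : 0 < α ∧ α < Real.pi)
    (z1 z2 z3 z4 : ℂ)
    (hq : ((z1 - z2) * (z3 - z4)) / ((z2 - z3) * (z4 - z1)) =
      Complex.exp (-2 * α * Complex.I))
    (hangle : (z4 - z1) / (z2 - z1) =
      (‖(z4 - z1) / (z2 - z1)‖ : ℂ) * Complex.exp (α * Complex.I)) :
    ‖z3 - z2‖ = ‖z1 - z2‖ ∧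
    ‖z3 - z4‖ = ‖z4 - z1‖ := by
  obtain ⟨hnum, hden⟩ := div_ne_zero_iff.mp (hq ▸ exp_ne_zero _)
  have h21 : z2 ≠ z1 := (sub_ne_zero.mp (left_ne_zero_of_mul hnum)).symm
  have hre : (‖(z4 - z1) / (z2 - z1)‖ : ℂ) ≠ exp (α * I) := fun h => by
    have him := congrArg im h
    rw [ofReal_im, exp_ofReal_mul_I_im] at him
    exact (Real.sin_pos_of_pos_of_lt_pi hα.1 hα.2).ne him
  have he2 : exp (α * I) ^ 2 * exp (-2 * α * I) = 1 := by
    rw [← exp_nat_mul, ← exp_add, ← exp_zero]; push_cast; ring_nf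
  refine norm_eq_of_cross_ratio (norm_exp_ofReal_mul_I α) hre h21 ?_ ?_
  · rw [div_eq_iff (sub_ne_zero.mpr h21)] at hangle
    exact hangle
  · rw [div_eq_iff hden] at hq
    linear_combination exp (α * I) ^ 2 * hq + (z2 - z3) * (z4 - z1) * he2

theorem stmt_1 (α : ℝ) (hα : 0 < α ∧ α < Real.pi)
    (z1 z2 z3 z4 : ℂ) (h23 : z2 ≠ z3) (h41 : z4 ≠ z1) (h21 : z2 ≠ z1)
    (hq : ((z1 - z2) * (z3 - z4)) / ((z2 - z3) * (z4 - z1)) =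
      Complex.exp (-2 * α * Complex.I))
    (hangle : (z4 - z1) / (z2 - z1) =
      (‖(z4 - z1) / (z2 - z1)‖ : ℂ) * Complex.exp (α * Complex.I)) :
    ‖z3 - z2‖ = ‖z1 - z2‖ ∧
    ‖z3 - z4‖ = ‖z4 - z1‖ :=
  stmt_1_general α hα z1 z2 z3 z4 hq hangle
end

section
/- Let R : ℤ² → ℝ be a function satisfying, for all relevant lattice points z = N + iM, the equation (N+M)(R(z+i)+R(z+1))(R(z)² - R(z+1)R(z-i) + cos(α)·R(z)(R(z-i)-R(z+1))) + (M-N)(R(z-i)+R(z+1))(R(z)² - R(z+1)R(z+i) + cos(α)·R(z)(R(z+i)-R(z+1))) = 0, where addition of 1 and i denotes shifts in N and M respectively. Then the function z ↦ 1/R(z) (assuming R is nowhere zero) satisfies the same equation with cos(α) replaced by cos(α) (i.e., this equation is invariant under R ↦ 1/R). -/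
/-! Under `R ↦ 1/R` each factor `R(z)² - R(z+1)R(z∓i) + t R(z)(R(z∓i) - R(z+1))` changes sign and
is divided by `R(z)² R(z+1) R(z∓i)`, while `R(z±i) + R(z+1)` is divided by `R(z+1) R(z±i)`; so the
left-hand side of (Ri) is multiplied by `-1 / (R(z)² R(z+1)² R(z+i) R(z-i))`. -/

/-- Equation (Ri) of the paper at the lattice point `z = N + iM`, with `t = cos α`. -/
def RiEq (t : ℝ) (R : ℤ → ℤ → ℝ) (N M : ℤ) : Prop :=
  ((N : ℝ) + (M : ℝ)) * (R N (M+1) + R (N+1) M) *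
      ((R N M)^2 - R (N+1) M * R N (M-1) + t * R N M * (R N (M-1) - R (N+1) M))
  + ((M : ℝ) - (N : ℝ)) * (R N (M-1) + R (N+1) M) *
      ((R N M)^2 - R (N+1) M * R N (M+1) + t * R N M * (R N (M+1) - R (N+1) M)) = 0

def riLHS (t : ℝ) (R : ℤ → ℤ → ℝ) (N M : ℤ) : ℝ :=
  ((N : ℝ) + (M : ℝ)) * (R N (M+1) + R (N+1) M) *
      ((R N M)^2 - R (N+1) M * R N (M-1) + t * R N M * (R N (M-1) - R (N+1) M))
  + ((M : ℝ) - (N : ℝ)) * (R N (M-1) + R (N+1) M) *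
      ((R N M)^2 - R (N+1) M * R N (M+1) + t * R N M * (R N (M+1) - R (N+1) M))

theorem riEq_iff_riLHS_eq_zero (t : ℝ) (R : ℤ → ℤ → ℝ) (N M : ℤ) :
    RiEq t R N M ↔ riLHS t R N M = 0 :=
  Iff.rfl

theorem riLHS_one_div {t : ℝ} {R : ℤ → ℤ → ℝ} {N M : ℤ} (ha : R N M ≠ 0)
    (hb : R (N+1) M ≠ 0) (hc : R N (M+1) ≠ 0) (hd : R N (M-1) ≠ 0) :
    riLHS t (fun N M => 1 / R N M) N M =
      -riLHS t R N M / (R N M ^ 2 * R (N+1) M ^ 2 * R N (M+1) * R N (M-1)) := by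
  unfold riLHS
  field_simp
  ring

theorem riEq_one_div_iff {t : ℝ} {R : ℤ → ℤ → ℝ} {N M : ℤ} (ha : R N M ≠ 0)
    (hb : R (N+1) M ≠ 0) (hc : R N (M+1) ≠ 0) (hd : R N (M-1) ≠ 0) :
    RiEq t (fun N M => 1 / R N M) N M ↔ RiEq t R N M := by
  simp only [riEq_iff_riLHS_eq_zero, riLHS_one_div ha hb hc hd, div_eq_zero_iff, neg_eq_zero]
  have : R N M ^ 2 * R (N+1) M ^ 2 * R N (M+1) * R N (M-1) ≠ 0 := by positivity
  simp only [this, or_false]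

theorem stmt_2 (α : ℝ) (R : ℤ → ℤ → ℝ) (hR : ∀ N M, R N M ≠ 0)
    (h : ∀ N M, RiEq (Real.cos α) R N M) :
    ∀ N M, RiEq (Real.cos α) (fun N M => 1 / R N M) N M := fun N M =>
  (riEq_one_div_iff (hR N M) (hR (N+1) M) (hR N (M+1)) (hR N (M-1))).2 (h N M)
end

section
/- Let R : ℤ² → ℝ be nowhere zero and satisfy, for parameter γ, the equation -M·R(z)R(z+1) + (N+1)·R(z+1)R(z+1+i) + (M+1)·R(z+1+i)R(z+i) - N·R(z+i)R(z) = (γ/2)(R(z)+R(z+1+i))(R(z+1)+R(z+i)) at a point z = N+iM. Then R̃ = 1/R satisfies the same equation at z with γ replaced by 2-γ. -/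
/-- Equation (square) of the paper at the lattice point `z = N + iM`, with parameter `γ`. -/
def SqEq (γ : ℝ) (R : ℤ → ℤ → ℝ) (N M : ℤ) : Prop :=
  -(M : ℝ) * R N M * R (N+1) M + ((N : ℝ) + 1) * R (N+1) M * R (N+1) (M+1)
    + ((M : ℝ) + 1) * R (N+1) (M+1) * R N (M+1) - (N : ℝ) * R N (M+1) * R N M
  = (γ / 2) * (R N M + R (N+1) (M+1)) * (R (N+1) M + R N (M+1))

/-!
Write `a, b, c, d` for the values of `R` at `z, z+1, z+1+i, z+i`. Multiplying the left-hand side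
of the equation for `1/R` by `abcd` gives the left-hand side for `R` with the coefficients of the
opposite edges exchanged. Since the coefficients `-M, M+1` and `N+1, -N` sum to `1` in pairs,
the two left-hand sides add up to `(a+c)(b+d)`, so the parameters `γ` and `2 - γ` add up to `2`.
-/

variable {K : Type*} [Field K]

/-- The left-hand side of `SqEq` at `z = n + im`, with `a, b, c, d` the values at
`z, z+1, z+1+i, z+i`. -/
def squareForm (n m a b c d : K) : K :=
  -m * a * b + (n + 1) * b * c + (m + 1) * c * d - n * d * a

theorem squareForm_add_mul_squareForm_inv (n m : K) {a b c d : K}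
    (ha : a ≠ 0) (hb : b ≠ 0) (hc : c ≠ 0) (hd : d ≠ 0) :
    squareForm n m a b c d + a * b * c * d * squareForm n m (1 / a) (1 / b) (1 / c) (1 / d)
      = (a + c) * (b + d) := by
  unfold squareForm
  field_simp
  ring

theorem squareForm_inv_eq [NeZero (2 : K)] {γ n m a b c d : K}
    (ha : a ≠ 0) (hb : b ≠ 0) (hc : c ≠ 0) (hd : d ≠ 0)
    (h : squareForm n m a b c d = γ / 2 * (a + c) * (b + d)) :
    squareForm n m (1 / a) (1 / b) (1 / c) (1 / d)
      = (2 - γ) / 2 * (1 / a + 1 / c) * (1 / b + 1 / d) := by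
  have hsum := squareForm_add_mul_squareForm_inv n m ha hb hc hd
  set s := squareForm n m (1 / a) (1 / b) (1 / c) (1 / d)
  have two_div_two : (2 : K) / 2 = 1 := div_self two_ne_zero
  have hs : a * b * c * d * s = (2 - γ) / 2 * ((a + c) * (b + d)) := by
    rw [h] at hsum
    linear_combination hsum - (a + c) * (b + d) * two_div_two
  calc s = a * b * c * d * s / (a * b * c * d) := by field_simp
    _ = (2 - γ) / 2 * (1 / a + 1 / c) * (1 / b + 1 / d) := by
      rw [hs]
      field_simp
      ring

theorem stmt_3 (γ : ℝ) (R : ℤ → ℤ → ℝ) (hR : ∀ N M, R N M ≠ 0)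
    (N M : ℤ) (h : SqEq γ R N M) :
    SqEq (2 - γ) (fun N M => 1 / R N M) N M :=
  squareForm_inv_eq (hR N M) (hR (N + 1) M) (hR (N + 1) (M + 1)) (hR N (M + 1)) h
end

section
/- Let 0 < γ < 2 and r(n+1) = ((2n+γ)/(2(n+1)-γ))·r(n) with r(0) = 1. Then r(n) ~ c·n^(γ-1) as n → ∞, where c = Γ(1-γ/2)/Γ(γ/2); that is, r(n)/n^(γ-1) tends to Γ(1-γ/2)/Γ(γ/2). -/
/-! The recurrence telescopes to `r n = ∏_{k<n} (k + γ/2) / (k + 1 - γ/2)`. Comparing the numerator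
and denominator with Euler's limit `GammaSeq s n → Γ(s)` at `s = γ/2` and `s = 1 - γ/2` shows that
such a product grows like `n ^ (γ/2 - (1 - γ/2)) = n ^ (γ - 1)` with constant `Γ(1 - γ/2) / Γ(γ/2)`. -/

open Filter Topology Finset

namespace Real

variable {a b : ℝ}

lemma natCast_add_ne_zero (ha : ∀ m : ℕ, a ≠ -m) (n : ℕ) : (n : ℝ) + a ≠ 0 := fun h =>
  ha n (by linarith)

lemma forall_ne_neg_natCast_of_pos (ha : 0 < a) : ∀ m : ℕ, a ≠ -m := fun m h => by
  have := m.cast_nonneg (α := ℝ)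
  linarith

lemma prod_range_div_div_rpow_eq (ha : ∀ m : ℕ, a ≠ -m) (hb : ∀ m : ℕ, b ≠ -m) {n : ℕ}
    (hn : n ≠ 0) :
    (∏ k ∈ range n, ((k + a) / (k + b))) / (n : ℝ) ^ (a - b) =
      GammaSeq b n / GammaSeq a n * ((n + b) / (n + a)) := by
  have hn' : (0 : ℝ) < n := by positivity
  have hprod {s : ℝ} (hs : ∀ m : ℕ, s ≠ -m) : ∏ j ∈ range n, ((j : ℝ) + s) ≠ 0 :=
    prod_ne_zero_iff.2 fun j _ => natCast_add_ne_zero hs j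
  have := hprod ha
  have := hprod hb
  have := natCast_add_ne_zero ha n
  have := natCast_add_ne_zero hb n
  have := (rpow_pos_of_pos hn' a).ne'
  have := (rpow_pos_of_pos hn' b).ne'
  have : (n.factorial : ℝ) ≠ 0 := by positivity
  simp only [GammaSeq, prod_range_succ, prod_div_distrib, rpow_sub hn', add_comm a, add_comm b]
  field_simp

lemma tendsto_natCast_add_div_natCast_add (ha : ∀ m : ℕ, a ≠ -m) (hb : ∀ m : ℕ, b ≠ -m) :
    Tendsto (fun n : ℕ => ((n : ℝ) + b) / (n + a)) atTop (𝓝 1) := by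
  have h := (tendsto_natCast_div_add_atTop a).div (tendsto_natCast_div_add_atTop b) one_ne_zero
  rw [div_one] at h
  refine h.congr' ?_
  filter_upwards [eventually_ne_atTop 0] with n hn
  have := natCast_add_ne_zero ha n
  have := natCast_add_ne_zero hb n
  simp only [Pi.div_apply]
  field_simp

theorem tendsto_prod_range_div_div_rpow (ha : ∀ m : ℕ, a ≠ -m) (hb : ∀ m : ℕ, b ≠ -m) :
    Tendsto (fun n : ℕ => (∏ k ∈ range n, ((k + a) / (k + b))) / (n : ℝ) ^ (a - b)) atTop
      (𝓝 (Gamma b / Gamma a)) := by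
  have h := ((GammaSeq_tendsto_Gamma b).div (GammaSeq_tendsto_Gamma a) (Gamma_ne_zero ha)).mul
    (tendsto_natCast_add_div_natCast_add ha hb)
  rw [mul_one] at h
  refine h.congr' ?_
  filter_upwards [eventually_ne_atTop 0] with n hn
  exact (prod_range_div_div_rpow_eq ha hb hn).symm

end Real

theorem stmt_5 (γ : ℝ) (hγ : 0 < γ ∧ γ < 2) (r : ℕ → ℝ) (hr0 : r 0 = 1)
    (hrec : ∀ n : ℕ, r (n+1) = ((2 * (n : ℝ) + γ) / (2 * ((n : ℝ) + 1) - γ)) * r n) :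
    Tendsto (fun n : ℕ => r n / (n : ℝ) ^ (γ - 1)) atTop
      (nhds (Real.Gamma (1 - γ/2) / Real.Gamma (γ/2))) := by
  have hr : r = fun n => ∏ k ∈ range n, ((k + γ / 2) / (k + (1 - γ / 2))) := by
    funext n
    refine (prod_range_induction _ r hr0 n fun k _ => ?_).symm
    rw [hrec, mul_comm, ← mul_div_mul_left ((k : ℝ) + γ / 2) _ (two_ne_zero' ℝ)]
    congr 2 <;> ring
  have hexp : γ - 1 = γ / 2 - (1 - γ / 2) := by ring
  rw [hr, hexp]
  exact Real.tendsto_prod_range_div_div_rpow (Real.forall_ne_neg_natCast_of_pos (by linarith))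
    (Real.forall_ne_neg_natCast_of_pos (by linarith))
end
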